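/- arXiv:2206.13151 — 7 statements merged into one kernel-verified Lean document; each statement's English description precedes it below -/
import Mathlib

section
/- The quadruple (φ′, ξ′, θ′, g′) again satisfies all six almost contact identities: φ′(ξ′)=0; θ′(φ′(X))=0 for all X; φ′(φ′(X)) = −X + θ′(X)·ξ′ for all X; θ′(ξ′)=1; g′(X,ξ′)=θ′(X) for all X; and g′(φ′(X),φ′(Y)) = g′(X,Y) − θ′(X)·θ′(Y) for all X,Y. Moreover g′ is symmetric. -/
/-!
The deformation is the composite of two operations that visibly preserve almost contact metric
structures. First the rescaling `(φ, ξ, θ, g) ↦ (φ, f⁻¹ξ, fθ, g_F)` with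
`g_F = F·g + (f² - F)·θ ⊗ θ = F·(g - θ ⊗ θ) + (fθ) ⊗ (fθ)`. Then the transport of the whole
structure along the transvection `τ = 1 - fθ ⊗ X₀`, a linear automorphism since `θ X₀ = 0`; as
`fθ ∘ φ = 0` and `τ⁻¹ = 1 + fθ ⊗ X₀`, the transported structure is
`(φ ∘ τ, f⁻¹ξ + X₀, fθ, g_F(τ·, τ·))`, which is exactly `(φ′, ξ′, θ′, g′)`.
-/

structure IsAlmostContactMetric {R V : Type*} [CommRing R] [AddCommGroup V] [Module R V]
    (φ : V →ₗ[R] V) (ξ : V) (θ : V →ₗ[R] R) (g : V →ₗ[R] V →ₗ[R] R) : Prop where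
  map_xi : φ ξ = 0
  form_map : ∀ X, θ (φ X) = 0
  map_map : ∀ X, φ (φ X) = -X + θ X • ξ
  form_xi : θ ξ = 1
  metric_xi : ∀ X, g X ξ = θ X
  metric_map_map : ∀ X Y, g (φ X) (φ Y) = g X Y - θ X * θ Y
  metric_comm : ∀ X Y, g X Y = g Y X

namespace IsAlmostContactMetric

section CommRing

variable {R V W : Type*} [CommRing R] [AddCommGroup V] [Module R V] [AddCommGroup W] [Module R W]
  {φ : V →ₗ[R] V} {ξ : V} {θ : V →ₗ[R] R} {g : V →ₗ[R] V →ₗ[R] R}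

theorem comap (h : IsAlmostContactMetric φ ξ θ g) (e : W ≃ₗ[R] V) :
    IsAlmostContactMetric (e.symm.conj φ) (e.symm ξ) (θ ∘ₗ e.toLinearMap)
      (g.compl₁₂ e.toLinearMap e.toLinearMap) where
  map_xi := by simp [LinearEquiv.conj_apply, h.map_xi]
  form_map X := by simp [LinearEquiv.conj_apply, h.form_map]
  map_map X := by simp [LinearEquiv.conj_apply, h.map_map]
  form_xi := by simp [h.form_xi]
  metric_xi X := by simp [h.metric_xi]
  metric_map_map X Y := by simp [LinearEquiv.conj_apply, h.metric_map_map]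
  metric_comm X Y := h.metric_comm (e X) (e Y)

theorem comap_transvection (h : IsAlmostContactMetric φ ξ θ g) {v : V} (hv : θ v = 0) :
    IsAlmostContactMetric (φ ∘ₗ LinearMap.transvection θ v) (ξ - v) θ
      (g.compl₁₂ (LinearMap.transvection θ v) (LinearMap.transvection θ v)) := by
  let e := LinearEquiv.transvection hv
  have he : e.symm = LinearEquiv.transvection (f := θ) (v := -v) (by simp [hv]) :=
    LinearEquiv.transvection.symm_eq hv
  have hτ : e.toLinearMap = LinearMap.transvection θ v := rfl
  have hφ : e.symm.conj φ = φ ∘ₗ LinearMap.transvection θ v := by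
    ext X
    rw [LinearEquiv.conj_apply, LinearEquiv.symm_symm, he, hτ]
    simp [LinearMap.transvection.apply, h.form_map]
  have hξ : e.symm ξ = ξ - v := by
    simp [he, LinearMap.transvection.apply, h.form_xi, sub_eq_add_neg]
  have hθ : θ ∘ₗ LinearMap.transvection θ v = θ := by
    ext X
    simp [LinearMap.transvection.apply, hv]
  simpa only [hφ, hξ, hτ, hθ] using h.comap e

end CommRing

theorem rescale {𝕂 V : Type*} [Field 𝕂] [AddCommGroup V] [Module 𝕂 V]
    {φ : V →ₗ[𝕂] V} {ξ : V} {θ : V →ₗ[𝕂] 𝕂} {g : V →ₗ[𝕂] V →ₗ[𝕂] 𝕂}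
    (h : IsAlmostContactMetric φ ξ θ g) {c : 𝕂} (hc : c ≠ 0) (F : 𝕂) :
    IsAlmostContactMetric φ (c⁻¹ • ξ) (c • θ) (F • g + (c ^ 2 - F) • θ.smulRight θ) where
  map_xi := by rw [map_smul, h.map_xi, smul_zero]
  form_map X := by simp [h.form_map]
  map_map X := by
    rw [h.map_map, LinearMap.smul_apply, smul_smul, smul_eq_mul, mul_right_comm,
      mul_inv_cancel₀ hc, one_mul]
  form_xi := by simp [h.form_xi, hc]
  metric_xi X := by
    simp only [LinearMap.add_apply, LinearMap.smul_apply, LinearMap.smulRight_apply, map_smul,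
      smul_eq_mul, h.metric_xi, h.form_xi]
    field_simp
    ring
  metric_map_map X Y := by
    simp only [LinearMap.add_apply, LinearMap.smul_apply, LinearMap.smulRight_apply, smul_eq_mul,
      h.metric_map_map, h.form_map]
    ring
  metric_comm X Y := by
    simp only [LinearMap.add_apply, LinearMap.smul_apply, LinearMap.smulRight_apply, smul_eq_mul,
      h.metric_comm X Y]
    ring

end IsAlmostContactMetric

theorem deformed_almost_contact_general
    {𝕂 : Type*} [Field 𝕂] {V : Type*} [AddCommGroup V] [Module 𝕂 V]
    (φ : V →ₗ[𝕂] V) (ξ : V) (θ : V →ₗ[𝕂] 𝕂) (g : V →ₗ[𝕂] V →ₗ[𝕂] 𝕂)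
    (hg_symm : ∀ X Y, g X Y = g Y X)
    (h1 : φ ξ = 0)
    (h2 : ∀ X, θ (φ X) = 0)
    (h3 : ∀ X, φ (φ X) = -X + θ X • ξ)
    (h4 : θ ξ = 1)
    (h5 : ∀ X, g X ξ = θ X)
    (h6 : ∀ X Y, g (φ X) (φ Y) = g X Y - θ X * θ Y)
    (f F : 𝕂) (hf : f ≠ 0)
    (X₀ : V) (hX₀ : θ X₀ = 0)
    (φ' : V → V) (hφ' : ∀ X, φ' X = φ X - (f * θ X) • φ X₀)
    (ξ' : V) (hξ' : ξ' = X₀ + f⁻¹ • ξ)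
    (θ' : V → 𝕂) (hθ' : ∀ X, θ' X = f * θ X)
    (g' : V → V → 𝕂)
    (hg' : ∀ X Y, g' X Y =
      F * g X Y - f * F * g X X₀ * θ Y - f * F * θ X * g Y X₀
        + (-F + f ^ 2 + f ^ 2 * F * g X₀ X₀) * θ X * θ Y) :
    φ' ξ' = 0 ∧
    (∀ X, θ' (φ' X) = 0) ∧
    (∀ X, φ' (φ' X) = -X + θ' X • ξ') ∧
    θ' ξ' = 1 ∧
    (∀ X, g' X ξ' = θ' X) ∧
    (∀ X Y, g' (φ' X) (φ' Y) = g' X Y - θ' X * θ' Y) ∧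
    (∀ X Y, g' X Y = g' Y X) := by
  have h : IsAlmostContactMetric φ ξ θ g := ⟨h1, h2, h3, h4, h5, h6, hg_symm⟩
  have hv : (f • θ) (-X₀) = 0 := by simp [hX₀]
  have h' := (h.rescale hf F).comap_transvection hv
  set τ := LinearMap.transvection (f • θ) (-X₀) with hτ
  obtain rfl : φ' = ⇑(φ ∘ₗ τ) := funext fun X => by
    simp [hφ', hτ, LinearMap.transvection.apply, sub_eq_add_neg]
  obtain rfl : ξ' = f⁻¹ • ξ - -X₀ := by rw [hξ', sub_neg_eq_add, add_comm]
  obtain rfl : θ' = ⇑(f • θ) := funext fun X => by simp [hθ']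
  obtain rfl : g' = fun X Y => ((F • g + (f ^ 2 - F) • θ.smulRight θ).compl₁₂ τ τ) X Y :=
    funext₂ fun X Y => by
      simp [hg', hτ, LinearMap.transvection.apply, hX₀, hg_symm X₀ Y]
      ring
  exact ⟨h'.map_xi, h'.form_map, h'.map_map, h'.form_xi, h'.metric_xi, h'.metric_map_map,
    h'.metric_comm⟩

/-- Lemma 2.3 of the paper: the deformed quadruple (φ′, ξ′, θ′, g′) again satisfies
all six almost contact identities, and g′ is symmetric. -/
theorem deformed_almost_contact
    {𝕂 : Type*} [Field 𝕂] {V : Type*} [AddCommGroup V] [Module 𝕂 V]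
    (φ : V →ₗ[𝕂] V) (ξ : V) (θ : V →ₗ[𝕂] 𝕂) (g : V →ₗ[𝕂] V →ₗ[𝕂] 𝕂)
    (hg_symm : ∀ X Y, g X Y = g Y X)
    (h1 : φ ξ = 0)
    (h2 : ∀ X, θ (φ X) = 0)
    (h3 : ∀ X, φ (φ X) = -X + θ X • ξ)
    (h4 : θ ξ = 1)
    (h5 : ∀ X, g X ξ = θ X)
    (h6 : ∀ X Y, g (φ X) (φ Y) = g X Y - θ X * θ Y)
    (f F : 𝕂) (hf : f ≠ 0) (hF : F ≠ 0)
    (X₀ : V) (hX₀ : θ X₀ = 0)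
    (φ' : V → V) (hφ' : ∀ X, φ' X = φ X - (f * θ X) • φ X₀)
    (ξ' : V) (hξ' : ξ' = X₀ + f⁻¹ • ξ)
    (θ' : V → 𝕂) (hθ' : ∀ X, θ' X = f * θ X)
    (g' : V → V → 𝕂)
    (hg' : ∀ X Y, g' X Y =
      F * g X Y - f * F * g X X₀ * θ Y - f * F * θ X * g Y X₀
        + (-F + f ^ 2 + f ^ 2 * F * g X₀ X₀) * θ X * θ Y) :
    φ' ξ' = 0 ∧
    (∀ X, θ' (φ' X) = 0) ∧
    (∀ X, φ' (φ' X) = -X + θ' X • ξ') ∧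
    θ' ξ' = 1 ∧
    (∀ X, g' X ξ' = θ' X) ∧
    (∀ X Y, g' (φ' X) (φ' Y) = g' X Y - θ' X * θ' Y) ∧
    (∀ X Y, g' X Y = g' Y X) :=
  deformed_almost_contact_general φ ξ θ g hg_symm h1 h2 h3 h4 h5 h6 f F hf X₀ hX₀ φ' hφ' ξ' hξ' θ'
    hθ' g' hg'
end

section
/- For every X ∈ V one has φ′(φ′(X)) = −X + θ′(X)·ξ′, i.e. the deformed endomorphism φ′ satisfies the almost contact squaring identity with respect to the deformed 1-form θ′ and deformed vector ξ′. -/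
namespace LinearMap

variable {R V : Type*} [CommRing R] [AddCommGroup V] [Module R V]
  {φ : V →ₗ[R] V} {ξ X₀ : V} {θ : V →ₗ[R] R}

def deformPhi (φ : V →ₗ[R] V) (θ : V →ₗ[R] R) (X₀ : V) (f : R) : V →ₗ[R] V :=
  φ - (f • θ).smulRight (φ X₀)

@[simp]
theorem deformPhi_apply (f : R) (X : V) :
    deformPhi φ θ X₀ f X = φ X - (f * θ X) • φ X₀ :=
  rfl

theorem apply_deformPhi_eq_zero (hθφ : ∀ X, θ (φ X) = 0) (f : R) (X : V) :
    θ (deformPhi φ θ X₀ f X) = 0 := by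
  simp [hθφ]

theorem apply_apply_eq_neg_of_apply_eq_zero (hφφ : ∀ X, φ (φ X) = -X + θ X • ξ) (hX₀ : θ X₀ = 0) :
    φ (φ X₀) = -X₀ := by
  simp [hφφ, hX₀]

theorem deformPhi_deformPhi (hθφ : ∀ X, θ (φ X) = 0) (hφφ : ∀ X, φ (φ X) = -X + θ X • ξ)
    (hX₀ : θ X₀ = 0) {f c : R} (hfc : f * c = 1) (X : V) :
    deformPhi φ θ X₀ f (deformPhi φ θ X₀ f X) = -X + (f * θ X) • (X₀ + c • ξ) := by
  have hξ : (f * θ X) • c • ξ = θ X • ξ := by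
    rw [smul_smul, mul_right_comm, hfc, one_mul]
  rw [deformPhi_apply, apply_deformPhi_eq_zero hθφ, mul_zero, zero_smul, sub_zero,
    deformPhi_apply, map_sub, map_smul, apply_apply_eq_neg_of_apply_eq_zero hφφ hX₀, hφφ,
    smul_add, hξ, smul_neg]
  abel

end LinearMap

theorem deformed_phi_squaring_identity_general
    {𝕂 : Type*} [Field 𝕂] {V : Type*} [AddCommGroup V] [Module 𝕂 V]
    (φ : V →ₗ[𝕂] V) (ξ : V) (θ : V →ₗ[𝕂] 𝕂)
    (h2 : ∀ X, θ (φ X) = 0)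
    (h3 : ∀ X, φ (φ X) = -X + θ X • ξ)
    (f : 𝕂) (hf : f ≠ 0)
    (X₀ : V) (hX₀ : θ X₀ = 0)
    (φ' : V → V) (hφ' : ∀ X, φ' X = φ X - (f * θ X) • φ X₀)
    (ξ' : V) (hξ' : ξ' = X₀ + f⁻¹ • ξ)
    (θ' : V → 𝕂) (hθ' : ∀ X, θ' X = f * θ X) :
    ∀ X, φ' (φ' X) = -X + θ' X • ξ' := by
  have hφ'_eq : φ' = LinearMap.deformPhi φ θ X₀ f := funext hφ'
  intro X
  rw [hφ'_eq, hθ', hξ']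
  exact LinearMap.deformPhi_deformPhi h2 h3 hX₀ (mul_inv_cancel₀ hf) X

/-- The deformed endomorphism φ′ satisfies the almost contact squaring identity
φ′(φ′(X)) = −X + θ′(X)·ξ′. -/
theorem deformed_phi_squaring_identity
    {𝕂 : Type*} [Field 𝕂] {V : Type*} [AddCommGroup V] [Module 𝕂 V]
    (φ : V →ₗ[𝕂] V) (ξ : V) (θ : V →ₗ[𝕂] 𝕂) (g : V →ₗ[𝕂] V →ₗ[𝕂] 𝕂)
    (hg_symm : ∀ X Y, g X Y = g Y X)
    (h1 : φ ξ = 0)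
    (h2 : ∀ X, θ (φ X) = 0)
    (h3 : ∀ X, φ (φ X) = -X + θ X • ξ)
    (h4 : θ ξ = 1)
    (h5 : ∀ X, g X ξ = θ X)
    (h6 : ∀ X Y, g (φ X) (φ Y) = g X Y - θ X * θ Y)
    (f F : 𝕂) (hf : f ≠ 0) (hF : F ≠ 0)
    (X₀ : V) (hX₀ : θ X₀ = 0)
    (φ' : V → V) (hφ' : ∀ X, φ' X = φ X - (f * θ X) • φ X₀)
    (ξ' : V) (hξ' : ξ' = X₀ + f⁻¹ • ξ)
    (θ' : V → 𝕂) (hθ' : ∀ X, θ' X = f * θ X) :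
    ∀ X, φ' (φ' X) = -X + θ' X • ξ' :=
  deformed_phi_squaring_identity_general φ ξ θ h2 h3 f hf X₀ hX₀ φ' hφ' ξ' hξ' θ' hθ'
end

section
/- For every X ∈ V one has g′(ξ′, X) = θ′(X), i.e. the deformed metric g′ and the deformed vector ξ′ reproduce the deformed 1-form θ′. -/
/-!
Since `θ X₀ = 0`, `θ ξ = 1` and `g ξ = θ`, the new vector `ξ′ = X₀ + f⁻¹ ξ` satisfies `θ ξ′ = f⁻¹`,
`g ξ′ Y = g X₀ Y + f⁻¹ θ Y` and `g ξ′ X₀ = g X₀ X₀`. Substituting these into `g′(ξ′, Y)`, the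
`g(X₀, Y)` terms and the `g(X₀, X₀)` terms cancel in pairs, and of the `θ Y` terms only `f θ Y` survives.
-/

section DeformedMetric

variable {𝕂 V : Type*} [Field 𝕂] [AddCommGroup V] [Module 𝕂 V]
  (θ : V →ₗ[𝕂] 𝕂) (g : V →ₗ[𝕂] V →ₗ[𝕂] 𝕂) (f F : 𝕂) (X₀ : V)

def deformedMetric (X Y : V) : 𝕂 :=
  F * g X Y - f * F * g X X₀ * θ Y - f * F * θ X * g Y X₀
    + (-F + f ^ 2 + f ^ 2 * F * g X₀ X₀) * θ X * θ Y

variable {θ g f F X₀}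

theorem deformedMetric_add_inv_smul_left {ξ : V} (hg_symm : ∀ X Y, g X Y = g Y X)
    (hξ : θ ξ = 1) (hgξ : ∀ X, g X ξ = θ X) (hf : f ≠ 0) (hX₀ : θ X₀ = 0) (Y : V) :
    deformedMetric θ g f F X₀ (X₀ + f⁻¹ • ξ) Y = f * θ Y := by
  have hθξ' : θ (X₀ + f⁻¹ • ξ) = f⁻¹ := by simp [hX₀, hξ]
  have hgξ' : ∀ Z, g (X₀ + f⁻¹ • ξ) Z = g Z X₀ + f⁻¹ * θ Z := fun Z => by
    simp [hg_symm _ Z, hgξ]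
  rw [deformedMetric, hθξ', hgξ', hgξ', hX₀]
  field_simp
  ring

end DeformedMetric

theorem deformed_metric_reproduces_deformed_one_form_general
    {𝕂 : Type*} [Field 𝕂] {V : Type*} [AddCommGroup V] [Module 𝕂 V]
    (ξ : V) (θ : V →ₗ[𝕂] 𝕂) (g : V →ₗ[𝕂] V →ₗ[𝕂] 𝕂)
    (hg_symm : ∀ X Y, g X Y = g Y X)
    (h4 : θ ξ = 1)
    (h5 : ∀ X, g X ξ = θ X)
    (f F : 𝕂) (hf : f ≠ 0)
    (X₀ : V) (hX₀ : θ X₀ = 0)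
    (ξ' : V) (hξ' : ξ' = X₀ + f⁻¹ • ξ)
    (θ' : V → 𝕂) (hθ' : ∀ X, θ' X = f * θ X)
    (g' : V → V → 𝕂)
    (hg' : ∀ X Y, g' X Y =
      F * g X Y - f * F * g X X₀ * θ Y - f * F * θ X * g Y X₀
        + (-F + f ^ 2 + f ^ 2 * F * g X₀ X₀) * θ X * θ Y) :
    ∀ X, g' ξ' X = θ' X := by
  intro X
  rw [hg', hθ', hξ']
  exact deformedMetric_add_inv_smul_left hg_symm h4 h5 hf hX₀ X

/-- The deformed metric g′ and the deformed vector ξ′ reproduce the deformed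
1-form θ′ : g′(ξ′, X) = θ′(X). -/
theorem deformed_metric_reproduces_deformed_one_form
    {𝕂 : Type*} [Field 𝕂] {V : Type*} [AddCommGroup V] [Module 𝕂 V]
    (φ : V →ₗ[𝕂] V) (ξ : V) (θ : V →ₗ[𝕂] 𝕂) (g : V →ₗ[𝕂] V →ₗ[𝕂] 𝕂)
    (hg_symm : ∀ X Y, g X Y = g Y X)
    (h1 : φ ξ = 0)
    (h2 : ∀ X, θ (φ X) = 0)
    (h3 : ∀ X, φ (φ X) = -X + θ X • ξ)
    (h4 : θ ξ = 1)
    (h5 : ∀ X, g X ξ = θ X)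
    (h6 : ∀ X Y, g (φ X) (φ Y) = g X Y - θ X * θ Y)
    (f F : 𝕂) (hf : f ≠ 0) (hF : F ≠ 0)
    (X₀ : V) (hX₀ : θ X₀ = 0)
    (ξ' : V) (hξ' : ξ' = X₀ + f⁻¹ • ξ)
    (θ' : V → 𝕂) (hθ' : ∀ X, θ' X = f * θ X)
    (g' : V → V → 𝕂)
    (hg' : ∀ X Y, g' X Y =
      F * g X Y - f * F * g X X₀ * θ Y - f * F * θ X * g Y X₀
        + (-F + f ^ 2 + f ^ 2 * F * g X₀ X₀) * θ X * θ Y) :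
    ∀ X, g' ξ' X = θ' X :=
  deformed_metric_reproduces_deformed_one_form_general ξ θ g hg_symm h4 h5 f F hf X₀ hX₀ ξ' hξ' θ'
    hθ' g' hg'
end

section
/- For all X, Y ∈ V one has g′(φ′(X), φ′(Y)) = g′(X,Y) − θ′(X)·θ′(Y), i.e. the deformed metric g′ is compatible with the deformed endomorphism φ′ and the deformed 1-form θ′. -/
/-!
Writing `T` for the transvection `X ↦ X - f θ(X) X₀`, the deformation reads
`φ′ = φ ∘ T` and `g′(X, Y) = F g(T X, T Y) + (f² - F) θ(X) θ(Y)`.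
Since `θ X₀ = 0`, `T` preserves `θ` and fixes `ker θ ⊇ im φ′` pointwise, so the compatibility of `g`
with `φ` transfers to `g′` and `φ′`.
-/

open Module LinearMap

section

variable {R V : Type*} [CommRing R] [AddCommGroup V] [Module R V]

theorem transvection_neg_smul_apply (θ : Dual R V) (c : R) (v X : V) :
    transvection θ (-c • v) X = X - (c * θ X) • v := by
  rw [transvection.apply, smul_smul, mul_neg, neg_smul, ← sub_eq_add_neg, mul_comm]

theorem map_transvection_apply {θ : Dual R V} {v : V} (hv : θ v = 0) (X : V) :
    θ (transvection θ v X) = θ X := by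
  simp [transvection.apply, hv]

theorem transvection_apply_of_map_eq_zero {θ : Dual R V} (v : V) {X : V} (hX : θ X = 0) :
    transvection θ v X = X := by
  simp [transvection.apply, hX]

theorem bilin_transvection_neg_smul (g : V →ₗ[R] V →ₗ[R] R) (θ : Dual R V) (c : R) (v X Y : V) :
    g (transvection θ (-c • v) X) (transvection θ (-c • v) Y) =
      g X Y - c * g X v * θ Y - c * θ X * g v Y + c ^ 2 * g v v * θ X * θ Y := by
  simp only [transvection_neg_smul_apply, map_sub, map_smul, LinearMap.sub_apply,
    LinearMap.smul_apply, smul_eq_mul]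
  ring

def transvectedForm (g : V →ₗ[R] V →ₗ[R] R) (θ : Dual R V) (v : V) (F c : R) (X Y : V) : R :=
  F * g (transvection θ v X) (transvection θ v Y) + (c - F) * θ X * θ Y

theorem transvectedForm_compatible {φ : V →ₗ[R] V} {θ : Dual R V} {g : V →ₗ[R] V →ₗ[R] R}
    (hθφ : ∀ X, θ (φ X) = 0) (hgφ : ∀ X Y, g (φ X) (φ Y) = g X Y - θ X * θ Y)
    {v : V} (hv : θ v = 0) (F c : R) (X Y : V) :
    transvectedForm g θ v F c (φ (transvection θ v X)) (φ (transvection θ v Y)) =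
      transvectedForm g θ v F c X Y - c * θ X * θ Y := by
  simp only [transvectedForm, transvection_apply_of_map_eq_zero v (hθφ _), hθφ, hgφ,
    map_transvection_apply hv]
  ring

end

theorem deformed_metric_compatibility_general
    {𝕂 : Type*} [Field 𝕂] {V : Type*} [AddCommGroup V] [Module 𝕂 V]
    (φ : V →ₗ[𝕂] V) (θ : V →ₗ[𝕂] 𝕂) (g : V →ₗ[𝕂] V →ₗ[𝕂] 𝕂)
    (hg_symm : ∀ X Y, g X Y = g Y X)
    (h2 : ∀ X, θ (φ X) = 0)
    (h6 : ∀ X Y, g (φ X) (φ Y) = g X Y - θ X * θ Y)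
    (f F : 𝕂)
    (X₀ : V) (hX₀ : θ X₀ = 0)
    (φ' : V → V) (hφ' : ∀ X, φ' X = φ X - (f * θ X) • φ X₀)
    (θ' : V → 𝕂) (hθ' : ∀ X, θ' X = f * θ X)
    (g' : V → V → 𝕂)
    (hg' : ∀ X Y, g' X Y =
      F * g X Y - f * F * g X X₀ * θ Y - f * F * θ X * g Y X₀
        + (-F + f ^ 2 + f ^ 2 * F * g X₀ X₀) * θ X * θ Y) :
    ∀ X Y, g' (φ' X) (φ' Y) = g' X Y - θ' X * θ' Y := by
  set T := transvection θ (-f • X₀)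
  have hφ'T : ∀ X, φ' X = φ (T X) := fun X => by
    rw [hφ', transvection_neg_smul_apply, map_sub, map_smul]
  have hg'T : ∀ X Y, g' X Y = transvectedForm g θ (-f • X₀) F (f ^ 2) X Y := fun X Y => by
    rw [hg', transvectedForm, bilin_transvection_neg_smul, hg_symm X₀ Y]
    ring
  have hv : θ (-f • X₀) = 0 := by rw [map_smul, hX₀, smul_zero]
  intro X Y
  rw [hg'T, hg'T, hφ'T, hφ'T, transvectedForm_compatible h2 h6 hv, hθ', hθ']
  ring

/-- Compatibility of the deformed metric with the deformed endomorphism: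
g′(φ′(X), φ′(Y)) = g′(X,Y) − θ′(X)·θ′(Y). -/
theorem deformed_metric_compatibility
    {𝕂 : Type*} [Field 𝕂] {V : Type*} [AddCommGroup V] [Module 𝕂 V]
    (φ : V →ₗ[𝕂] V) (ξ : V) (θ : V →ₗ[𝕂] 𝕂) (g : V →ₗ[𝕂] V →ₗ[𝕂] 𝕂)
    (hg_symm : ∀ X Y, g X Y = g Y X)
    (h1 : φ ξ = 0)
    (h2 : ∀ X, θ (φ X) = 0)
    (h3 : ∀ X, φ (φ X) = -X + θ X • ξ)
    (h4 : θ ξ = 1)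
    (h5 : ∀ X, g X ξ = θ X)
    (h6 : ∀ X Y, g (φ X) (φ Y) = g X Y - θ X * θ Y)
    (f F : 𝕂) (hf : f ≠ 0) (hF : F ≠ 0)
    (X₀ : V) (hX₀ : θ X₀ = 0)
    (φ' : V → V) (hφ' : ∀ X, φ' X = φ X - (f * θ X) • φ X₀)
    (θ' : V → 𝕂) (hθ' : ∀ X, θ' X = f * θ X)
    (g' : V → V → 𝕂)
    (hg' : ∀ X Y, g' X Y =
      F * g X Y - f * F * g X X₀ * θ Y - f * F * θ X * g Y X₀
        + (-F + f ^ 2 + f ^ 2 * F * g X₀ X₀) * θ X * θ Y) :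
    ∀ X Y, g' (φ' X) (φ' Y) = g' X Y - θ' X * θ' Y :=
  deformed_metric_compatibility_general φ θ g hg_symm h2 h6 f F X₀ hX₀ φ' hφ' θ' hθ' g' hg'
end

section
/- For every y ∈ M₂(ℂ), t ∈ ℂ, a ∈ M₂(ℂ) and b ∈ ℂ, the following equivalence holds: there exists ζ ∈ ℂ with P_{y,t}(ζ) = P_{y+a, t+b}(ζ) if and only if [there exists ζ ∈ ℂ with a₀₀ + ζ·a₀₁ = 0 and a₁₀ + ζ·a₁₁ = 0] and b − y₀₀·a₁₁ − y₁₀·a₀₁ + y₀₁·a₁₀ + y₁₁·a₀₀ = 0. -/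
open Complex

/-- The point of the Ren–Wang twistor line `C_{(y,t)}` in the coordinate chart
`W = ℂ⁴`, at parameter `ζ`. Here `⟨w, w̃⟩ = w₁·w̃₂ + w̃₁·w₂`. -/
noncomputable def renWangLinePoint (y₀₀ y₀₁ y₁₀ y₁₁ t ζ : ℂ) : ℂ × ℂ × ℂ × ℂ :=
  (ζ, y₀₀ + ζ * y₀₁, y₁₀ + ζ * y₁₁,
    t - ((y₀₀ + ζ * y₀₁) * y₁₁ + y₀₁ * (y₁₀ + ζ * y₁₁)))

/- Once the middle coordinates agree, `ζ * a₀₁ = -a₀₀` and `ζ * a₁₁ = -a₁₀` eliminate `ζ`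
from the difference of the last coordinates, leaving the `ζ`-free relation on `b`. -/
theorem renWangLinePoint_eq_shift_iff (y₀₀ y₀₁ y₁₀ y₁₁ t a₀₀ a₀₁ a₁₀ a₁₁ b ζ : ℂ) :
    renWangLinePoint y₀₀ y₀₁ y₁₀ y₁₁ t ζ =
        renWangLinePoint (y₀₀ + a₀₀) (y₀₁ + a₀₁) (y₁₀ + a₁₀) (y₁₁ + a₁₁) (t + b) ζ ↔
      (a₀₀ + ζ * a₀₁ = 0 ∧ a₁₀ + ζ * a₁₁ = 0) ∧
        b - y₀₀ * a₁₁ - y₁₀ * a₀₁ + y₀₁ * a₁₀ + y₁₁ * a₀₀ = 0 := by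
  simp only [renWangLinePoint, Prod.mk.injEq, true_and]
  constructor
  · rintro ⟨h₀, h₁, hlast⟩
    have e₀ : a₀₀ + ζ * a₀₁ = 0 := by linear_combination -h₀
    have e₁ : a₁₀ + ζ * a₁₁ = 0 := by linear_combination -h₁
    exact ⟨⟨e₀, e₁⟩, by linear_combination -hlast + (2 * y₁₁ + a₁₁) * e₀ + (2 * y₀₁ + a₀₁) * e₁⟩
  · rintro ⟨⟨e₀, e₁⟩, hb⟩
    exact ⟨by linear_combination -e₀, by linear_combination -e₁,
      by linear_combination (2 * y₁₁ + a₁₁) * e₀ + (2 * y₀₁ + a₀₁) * e₁ - hb⟩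

/-- Lemma 5.2 of the paper: the twistor lines `C_{(y,t)}` and `C_{(y,t)+v}`
intersect iff there is a `ζ` solving the two linear equations and the linear
relation `b − y₀₀a₁₁ − y₁₀a₀₁ + y₀₁a₁₀ + y₁₁a₀₀ = 0` holds. -/
theorem renWang_lines_intersect_iff
    (y₀₀ y₀₁ y₁₀ y₁₁ t a₀₀ a₀₁ a₁₀ a₁₁ b : ℂ) :
    (∃ ζ : ℂ, renWangLinePoint y₀₀ y₀₁ y₁₀ y₁₁ t ζ =
        renWangLinePoint (y₀₀ + a₀₀) (y₀₁ + a₀₁) (y₁₀ + a₁₀) (y₁₁ + a₁₁) (t + b) ζ) ↔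
      ((∃ ζ : ℂ, a₀₀ + ζ * a₀₁ = 0 ∧ a₁₀ + ζ * a₁₁ = 0) ∧
        b - y₀₀ * a₁₁ - y₁₀ * a₀₁ + y₀₁ * a₁₀ + y₁₁ * a₀₀ = 0) := by
  simp only [renWangLinePoint_eq_shift_iff, exists_and_right]
end

section
/- The range of F equals the set {(ζ, ω₀, ω₁, ω₂) ∈ ℂ⁴ : (1 + |ζ|²)·Re(ω₂) = |ω₁|² − |ω₀|² − 2·Re(ω₀·ω₁·conj(ζ))}. -/
/-!
Put `a = y₀₀` and `b = y₁₀`; then `y₁₁ = ā`, `y₀₁ = -b̄`, so `ω₀ = a - ζb̄`, `ω₁ = b + ζā` and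
`ω₂ = |b|² - |a|² + 2ζāb̄ - 2is`. Expanding, the right-hand side of the quadric equation is
`(1 + |ζ|²)(|b|² - |a|² + 2 Re(ζāb̄)) = (1 + |ζ|²) Re ω₂`. Conversely, for fixed `ζ` the system
`a - ζb̄ = ω₀`, `b + ζā = ω₁` has the solution `a = (ω₀ + ζω̄₁)/(1 + |ζ|²)`, `b = ω₁ - ζā`;
the parameter `s` then takes care of `Im ω₂`, and the equation forces `Re ω₂`.
-/

open Complex

/-- Parametrization of the image in the chart `W = ℂ⁴` of the CR twistor space
of the real slice of the Ren–Wang spacetime. -/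
noncomputable def crTwistorParam (p : ℝ × ℝ × ℝ × ℝ × ℝ × ℂ) : ℂ × ℂ × ℂ × ℂ :=
  let x₁ := p.1; let x₂ := p.2.1; let x₃ := p.2.2.1; let x₄ := p.2.2.2.1
  let s := p.2.2.2.2.1; let ζ := p.2.2.2.2.2
  let y₀₀ : ℂ := (x₁ : ℂ) + Complex.I * (x₂ : ℂ)
  let y₀₁ : ℂ := -(x₃ : ℂ) + Complex.I * (x₄ : ℂ)
  let y₁₀ : ℂ := (x₃ : ℂ) + Complex.I * (x₄ : ℂ)
  let y₁₁ : ℂ := (x₁ : ℂ) - Complex.I * (x₂ : ℂ)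
  let t : ℂ := -2 * Complex.I * (s : ℂ)
  let ω₀ : ℂ := y₀₀ + ζ * y₀₁
  let ω₁ : ℂ := y₁₀ + ζ * y₁₁
  (ζ, ω₀, ω₁, t - (ω₀ * y₁₁ + y₀₁ * ω₁))

open ComplexConjugate

namespace CRTwistor

def crQuadric : Set (ℂ × ℂ × ℂ × ℂ) :=
  {p | (1 + ‖p.1‖ ^ 2) * p.2.2.2.re =
      ‖p.2.2.1‖ ^ 2 - ‖p.2.1‖ ^ 2 - 2 * (p.2.1 * p.2.2.1 * conj p.1).re}

noncomputable def twistorPoint (a b : ℂ) (s : ℝ) (ζ : ℂ) : ℂ × ℂ × ℂ × ℂ :=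
  (ζ, a - ζ * conj b, b + ζ * conj a,
    ((‖b‖ ^ 2 - ‖a‖ ^ 2 : ℝ) : ℂ) + 2 * ζ * conj a * conj b - 2 * I * s)

theorem crTwistorParam_eq_twistorPoint (a b : ℂ) (s : ℝ) (ζ : ℂ) :
    crTwistorParam (a.re, a.im, b.re, b.im, s, ζ) = twistorPoint a b s ζ := by
  have hy₀₀ : (a.re : ℂ) + I * a.im = a := by apply Complex.ext <;> simp
  have hy₀₁ : -(b.re : ℂ) + I * b.im = -conj b := by apply Complex.ext <;> simp
  have hy₁₀ : (b.re : ℂ) + I * b.im = b := by apply Complex.ext <;> simp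
  have hy₁₁ : (a.re : ℂ) - I * a.im = conj a := by apply Complex.ext <;> simp
  have ha : a * conj a = ((‖a‖ ^ 2 : ℝ) : ℂ) := by rw [mul_conj, normSq_eq_norm_sq]
  have hb : b * conj b = ((‖b‖ ^ 2 : ℝ) : ℂ) := by rw [mul_conj, normSq_eq_norm_sq]
  simp only [crTwistorParam, twistorPoint, hy₀₀, hy₀₁, hy₁₀, hy₁₁, Prod.mk.injEq, true_and]
  refine ⟨by ring, ?_⟩
  push_cast at ha hb ⊢
  linear_combination hb - ha

theorem twistorPoint_mem_crQuadric (a b : ℂ) (s : ℝ) (ζ : ℂ) :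
    twistorPoint a b s ζ ∈ crQuadric := by
  simp only [crQuadric, twistorPoint, Set.mem_ofPred_eq, Complex.sq_norm, normSq_apply, add_re,
    sub_re, mul_re, add_im, sub_im, mul_im, conj_re, conj_im, ofReal_re, ofReal_im, I_re, I_im,
    re_ofNat, im_ofNat]
  ring

theorem exists_sub_mul_conj_eq_and_add_mul_conj_eq (ζ ω₀ ω₁ : ℂ) :
    ∃ a b : ℂ, a - ζ * conj b = ω₀ ∧ b + ζ * conj a = ω₁ := by
  have hd : ((1 + ‖ζ‖ ^ 2 : ℝ) : ℂ) ≠ 0 := by exact_mod_cast (by positivity : (1 + ‖ζ‖ ^ 2 : ℝ) ≠ 0)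
  obtain ⟨a, ha⟩ : ∃ a : ℂ, a * ((1 + ‖ζ‖ ^ 2 : ℝ) : ℂ) = ω₀ + ζ * conj ω₁ :=
    ⟨_, div_mul_cancel₀ _ hd⟩
  refine ⟨a, ω₁ - ζ * conj a, ?_, by ring⟩
  have hζ : ζ * conj ζ = ((‖ζ‖ ^ 2 : ℝ) : ℂ) := by rw [mul_conj, normSq_eq_norm_sq]
  simp only [map_sub, map_mul, conj_conj]
  push_cast at ha hζ
  linear_combination ha + a * hζ

theorem exists_twistorPoint_eq {ζ ω₀ ω₁ ω₂ : ℂ} (h : (ζ, ω₀, ω₁, ω₂) ∈ crQuadric) :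
    ∃ a b : ℂ, ∃ s : ℝ, twistorPoint a b s ζ = (ζ, ω₀, ω₁, ω₂) := by
  obtain ⟨a, b, rfl, rfl⟩ := exists_sub_mul_conj_eq_and_add_mul_conj_eq ζ ω₀ ω₁
  set s : ℝ := (2 * (ζ * conj a * conj b).im - ω₂.im) / 2
  refine ⟨a, b, s, ?_⟩
  have hd : (1 + ‖ζ‖ ^ 2 : ℝ) ≠ 0 := by positivity
  have hre : (twistorPoint a b s ζ).2.2.2.re = ω₂.re :=
    mul_left_cancel₀ hd ((twistorPoint_mem_crQuadric a b s ζ).trans h.symm)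
  simp only [twistorPoint, Prod.mk.injEq, true_and]
  apply Complex.ext
  · exact hre
  · simp only [s, sub_im, add_im, mul_im, mul_re, conj_re, conj_im, ofReal_re, ofReal_im, I_re,
      I_im, re_ofNat, im_ofNat]
    ring

end CRTwistor

open CRTwistor

/-- The image of the CR twistor space of the real slice in the chart `W` is cut
out by `(1+|ζ|²)·Re(ω₂) = |ω₁|² − |ω₀|² − 2·Re(ω₀ω₁ζ̄)`. -/
theorem crTwistorParam_range :
    Set.range crTwistorParam =
      {p : ℂ × ℂ × ℂ × ℂ |
        (1 + ‖p.1‖ ^ 2) * p.2.2.2.re =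
          ‖p.2.2.1‖ ^ 2 - ‖p.2.1‖ ^ 2 -
            2 * (p.2.1 * p.2.2.1 * (starRingEnd ℂ) p.1).re} := by
  change Set.range crTwistorParam = crQuadric
  apply Set.Subset.antisymm
  · rintro _ ⟨⟨x₁, x₂, x₃, x₄, s, ζ⟩, rfl⟩
    rw [crTwistorParam_eq_twistorPoint ⟨x₁, x₂⟩ ⟨x₃, x₄⟩ s ζ]
    exact twistorPoint_mem_crQuadric _ _ s ζ
  · rintro ⟨ζ, ω₀, ω₁, ω₂⟩ h
    obtain ⟨a, b, s, hp⟩ := exists_twistorPoint_eq h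
    exact ⟨(a.re, a.im, b.re, b.im, s, ζ), (crTwistorParam_eq_twistorPoint a b s ζ).trans hp⟩
end

section
/- The map F is injective. -/
open Complex

/-! With `u = y₀₀` and `v = y₁₀` one has `y₁₁ = conj u` and `y₀₁ = -conj v`, so for fixed `ζ` the
second and third components are the ℝ-linear map `(u, v) ↦ (u - ζ v̄, v + ζ ū)`. Its kernel is
trivial: `u = ζ v̄` and `v = -ζ ū` give `v = -|ζ|² v`, hence `v = 0 = u`. Once `ζ, u, v` are
recovered, the last component determines `s`. -/

open ComplexConjugate

def twistorIncidence (ζ : ℂ) (uv : ℂ × ℂ) : ℂ × ℂ :=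
  (uv.1 - ζ * conj uv.2, uv.2 + ζ * conj uv.1)

theorem twistorIncidence_sub (ζ : ℂ) (p q : ℂ × ℂ) :
    twistorIncidence ζ (p - q) = twistorIncidence ζ p - twistorIncidence ζ q := by
  ext <;> simp only [twistorIncidence, Prod.fst_sub, Prod.snd_sub, map_sub] <;> ring

theorem eq_zero_of_twistorIncidence_eq_zero {ζ : ℂ} {uv : ℂ × ℂ}
    (h : twistorIncidence ζ uv = 0) : uv = 0 := by
  obtain ⟨u, v⟩ := uv
  obtain ⟨h₀, h₁⟩ := Prod.mk_eq_zero.mp h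
  have hu : u = ζ * conj v := sub_eq_zero.mp h₀
  have hv_mul : (1 + (normSq ζ : ℂ)) * v = 0 := by
    rw [← mul_conj, ← h₁, hu, map_mul, conj_conj]
    ring
  have hv : v = 0 :=
    (mul_eq_zero.mp hv_mul).resolve_left (by norm_cast; linarith [normSq_nonneg ζ])
  simp [hu, hv]

theorem twistorIncidence_injective (ζ : ℂ) : Function.Injective (twistorIncidence ζ) := by
  intro p q h
  rw [← sub_eq_zero, ← twistorIncidence_sub] at h
  exact sub_eq_zero.mp (eq_zero_of_twistorIncidence_eq_zero h)

/-- The parametrization of the CR twistor space in the chart `W` is injective. -/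
theorem crTwistorParam_injective : Function.Injective crTwistorParam := by
  rintro ⟨x₁, x₂, x₃, x₄, s, ζ⟩ ⟨x₁', x₂', x₃', x₄', s', ζ'⟩ h
  simp only [crTwistorParam, Prod.mk.injEq] at h
  obtain ⟨rfl, h₀, h₁, ht⟩ := h
  have huv : twistorIncidence ζ (⟨x₁, x₂⟩, ⟨x₃, x₄⟩) =
      twistorIncidence ζ (⟨x₁', x₂'⟩, ⟨x₃', x₄'⟩) := by
    simp only [twistorIncidence, mk_eq_add_mul_I, map_add, map_mul, conj_ofReal, conj_I]
    ext
    · linear_combination h₀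
    · linear_combination h₁
  obtain ⟨⟨rfl, rfl⟩, rfl, rfl⟩ := by simpa using twistorIncidence_injective ζ huv
  obtain rfl : s = s' := by
    rwa [sub_left_inj, mul_right_inj' (by simp), ofReal_inj] at ht
  rfl
end
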